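/- With the k-clustering coefficient C_k^F(w) = A_k^F(w)/C(d^F(w), k), one has C_k^{G×H}((u,v)) = k! · C_k^G(u) · C_k^H(v) · D, where D = [C(d^G(u),k) · C(d^H(v),k)] / C(d^G(u) d^H(v), k), provided all the binomial coefficients in denominators are nonzero. -/

import Mathlib

open MeasureTheory ProbabilityTheory Filter

noncomputable section

abbrev EdgeSlot (n : ℕ) := {s : Sym2 (Fin n) // ¬ s.IsDiag}

abbrev ERSpace (n : ℕ) := EdgeSlot n → Bool

/-- The Erdős–Rényi measure: each potential edge present independently with prob `p`. -/
def erMeasure (n : ℕ) (p : ℝ) : Measure (ERSpace n) :=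
  Measure.pi fun _ => (PMF.bernoulli (min (Real.toNNReal p) 1) (min_le_right _ _)).toMeasure

def edgeSlot {n : ℕ} {u v : Fin n} (h : u ≠ v) : EdgeSlot n :=
  ⟨s(u, v), by simpa using h⟩

/-- The graph associated to an outcome of edge indicators. -/
def erGraph {n : ℕ} (ω : ERSpace n) : SimpleGraph (Fin n) where
  Adj u v := ∃ h : u ≠ v, ω (edgeSlot h) = true
  symm := by
    constructor
    rintro u v ⟨h, hw⟩
    refine ⟨h.symm, ?_⟩
    have he : edgeSlot h.symm = edgeSlot h := Subtype.ext (Sym2.eq_swap)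
    rw [he]; exact hw
  loopless := by constructor; rintro u ⟨h, -⟩; exact h rfl

/-- Number of `k`-cliques in a graph on a finite vertex set. -/
def cliqueCount {V : Type*} [Fintype V] (G : SimpleGraph V) (k : ℕ) : ℕ :=
  Set.ncard {s : Finset V | G.IsNClique k s}

/-- The tensor (categorical) product of two simple graphs. -/
def tensorProd {α β : Type*} (G : SimpleGraph α) (H : SimpleGraph β) :
    SimpleGraph (α × β) where
  Adj x y := G.Adj x.1 y.1 ∧ H.Adj x.2 y.2
  symm := ⟨fun _ _ ⟨h1, h2⟩ => ⟨h1.symm, h2.symm⟩⟩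
  loopless := ⟨fun x h => G.loopless.irrefl x.1 h.1⟩

instance {α β : Type*} (G : SimpleGraph α) (H : SimpleGraph β)
    [DecidableRel G.Adj] [DecidableRel H.Adj] : DecidableRel (tensorProd G H).Adj :=
  fun _ _ => show Decidable (_ ∧ _) from instDecidableAnd

/-- Number of `k`-cliques contained in the open neighborhood of `w`. -/
def nbhdCliqueCount {V : Type*} [Fintype V] (G : SimpleGraph V) (k : ℕ) (w : V) : ℕ :=
  Set.ncard {s : Finset V | G.IsNClique k s ∧ ∀ x ∈ s, G.Adj w x}

/-- Number of isolated vertices. -/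
def isolatedCount {V : Type*} [Fintype V] (K : SimpleGraph V) : ℕ :=
  Set.ncard {v : V | ∀ w, ¬ K.Adj v w}

end


/-! A map `f : Fin k → V` whose values are pairwise adjacent and all adjacent to `w` is an
injective enumeration of a `k`-clique in `N(w)`, and every such clique has exactly `k!`
enumerations. Adjacency in the tensor product is coordinatewise, so `f : Fin k → α × β` is
such an enumeration at `(u, v)` iff its coordinate maps are enumerations at `u` and at `v`. Hence
`k! A^{G×H} = (k! A^G) (k! A^H)`; together with `d^{G×H} = d^G d^H` the identity is algebra. -/

open Function Finset
open scoped Nat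

theorem card_injective_image_eq_factorial {V : Type*} [DecidableEq V] {k : ℕ} {s : Finset V}
    (hs : #s = k) : Nat.card {f : Fin k → V // Injective f ∧ univ.image f = s} = k ! := by
  let e : {f : Fin k → V // Injective f ∧ univ.image f = s} ≃ (Fin k ≃ s) :=
    { toFun f := Equiv.ofBijective
        (fun i => ⟨f.1 i, f.2.2.subset (mem_image_of_mem f.1 (mem_univ i))⟩)
        ⟨fun i j h => f.2.1 (congrArg Subtype.val h), fun y => by
          obtain ⟨i, -, hi⟩ := mem_image.mp (f.2.2.symm.subset y.2)
          exact ⟨i, Subtype.ext hi⟩⟩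
      invFun e := ⟨fun i => e i, Subtype.val_injective.comp e.injective, by
        ext x
        simp only [mem_image, mem_univ, true_and]
        exact ⟨by rintro ⟨i, rfl⟩; exact (e i).2,
          fun hx => (e.surjective ⟨x, hx⟩).imp fun _ h => congrArg Subtype.val h⟩⟩
      left_inv _ := rfl
      right_inv _ := Equiv.ext fun _ => rfl }
  rw [Nat.card_congr e, Nat.card_eq_fintype_card, Fintype.card_equiv (equivFinOfCardEq hs).symm,
    Fintype.card_fin]

theorem card_injective_image_pred_eq_factorial_mul {V : Type*} [Fintype V] [DecidableEq V] (k : ℕ)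
    (P : Finset V → Prop) :
    Nat.card {f : Fin k → V // Injective f ∧ P (univ.image f)}
      = k ! * Nat.card {s : Finset V // #s = k ∧ P s} := by
  classical
  let e : {f : Fin k → V // Injective f ∧ P (univ.image f)} ≃
      Σ s : {s : Finset V // #s = k ∧ P s},
        {f : Fin k → V // Injective f ∧ univ.image f = s} :=
    { toFun f := ⟨⟨univ.image f.1, by rw [card_image_of_injective _ f.2.1, Finset.card_fin],
        f.2.2⟩, ⟨f, f.2.1, rfl⟩⟩
      invFun p := ⟨p.2.1, p.2.2.1, by rw [p.2.2.2]; exact p.1.2.2⟩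
      left_inv _ := rfl
      right_inv := by
        rintro ⟨⟨s, hs⟩, f, -, hfs⟩
        obtain rfl : univ.image f = s := hfs
        rfl }
  rw [Nat.card_congr e, Nat.card_sigma]
  simp only [fun s : {s : Finset V // #s = k ∧ P s} => card_injective_image_eq_factorial s.2.1]
  rw [sum_const, Finset.card_univ, smul_eq_mul, mul_comm, Nat.card_eq_fintype_card]

namespace SimpleGraph

variable {V ι : Type*} (G : SimpleGraph V)

def IsNbhdCliqueMap (w : V) (f : ι → V) : Prop :=
  Pairwise (G.Adj on f) ∧ ∀ i, G.Adj w (f i)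

theorem pairwise_adj_iff_injective_and_isClique_range {f : ι → V} :
    Pairwise (G.Adj on f) ↔ Injective f ∧ G.IsClique (Set.range f) := by
  refine ⟨fun h => ⟨fun i j hij => ?_, h.range_pairwise⟩, fun ⟨hinj, hclique⟩ i j hij =>
    hclique (Set.mem_range_self i) (Set.mem_range_self j) (hinj.ne hij)⟩
  by_contra hne
  exact (h hne).ne hij

theorem isNbhdCliqueMap_iff [DecidableEq V] [Fintype ι] {w : V} {f : ι → V} :
    G.IsNbhdCliqueMap w f ↔ Injective f ∧
      (G.IsClique (univ.image f : Set V) ∧ ∀ x ∈ univ.image f, G.Adj w x) := by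
  rw [IsNbhdCliqueMap, pairwise_adj_iff_injective_and_isClique_range]
  simp [and_assoc]

theorem card_isNbhdCliqueMap [Fintype V] (k : ℕ) (w : V) :
    Nat.card {f : Fin k → V // G.IsNbhdCliqueMap w f} = k ! * nbhdCliqueCount G k w := by
  classical
  calc Nat.card {f : Fin k → V // G.IsNbhdCliqueMap w f}
      = Nat.card {f : Fin k → V // Injective f ∧
          (G.IsClique (univ.image f : Set V) ∧ ∀ x ∈ univ.image f, G.Adj w x)} := by
        simp_rw [isNbhdCliqueMap_iff]
    _ = k ! * Nat.card {s : Finset V //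
          #s = k ∧ (G.IsClique (s : Set V) ∧ ∀ x ∈ s, G.Adj w x)} :=
        card_injective_image_pred_eq_factorial_mul k fun s =>
          G.IsClique (s : Set V) ∧ ∀ x ∈ s, G.Adj w x
    _ = k ! * nbhdCliqueCount G k w := by
        rw [nbhdCliqueCount, ← Nat.card_coe_set_eq]
        exact congrArg _ <| Nat.card_congr <| Equiv.subtypeEquivRight fun s => by
          change _ ↔ G.IsNClique k s ∧ _
          rw [isNClique_iff]
          tauto

theorem isNbhdCliqueMap_tensorProd_iff {W : Type*} (H : SimpleGraph W) {u : V} {v : W}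
    {f : ι → V × W} :
    (tensorProd G H).IsNbhdCliqueMap (u, v) f ↔
      G.IsNbhdCliqueMap u (Prod.fst ∘ f) ∧ H.IsNbhdCliqueMap v (Prod.snd ∘ f) := by
  simp only [IsNbhdCliqueMap, tensorProd, Pairwise, onFun, comp_apply, forall_and]
  tauto

theorem card_isNbhdCliqueMap_tensorProd {W : Type*} (H : SimpleGraph W) (u : V) (v : W) :
    Nat.card {f : ι → V × W // (tensorProd G H).IsNbhdCliqueMap (u, v) f}
      = Nat.card {f : ι → V // G.IsNbhdCliqueMap u f}
        * Nat.card {g : ι → W // H.IsNbhdCliqueMap v g} := by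
  rw [← Nat.card_prod]
  exact Nat.card_congr <| ((Equiv.arrowProdEquivProdArrow _ _ _).subtypeEquiv fun f =>
    isNbhdCliqueMap_tensorProd_iff G H).trans Equiv.subtypeProdEquivProd

end SimpleGraph

open SimpleGraph

theorem nbhdCliqueCount_tensorProd {α β : Type*} [Fintype α] [Fintype β]
    (G : SimpleGraph α) (H : SimpleGraph β) (k : ℕ) (u : α) (v : β) :
    nbhdCliqueCount (tensorProd G H) k (u, v)
      = k ! * nbhdCliqueCount G k u * nbhdCliqueCount H k v := by
  apply Nat.eq_of_mul_eq_mul_left k.factorial_pos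
  rw [← card_isNbhdCliqueMap, card_isNbhdCliqueMap_tensorProd, card_isNbhdCliqueMap,
    card_isNbhdCliqueMap]
  ring

theorem degree_tensorProd {α β : Type*} [Fintype α] [Fintype β]
    (G : SimpleGraph α) (H : SimpleGraph β) [DecidableRel G.Adj] [DecidableRel H.Adj]
    (u : α) (v : β) :
    (tensorProd G H).degree (u, v) = G.degree u * H.degree v := by
  classical
  rw [← card_neighborFinset_eq_degree, ← card_neighborFinset_eq_degree,
    ← card_neighborFinset_eq_degree, ← card_product]
  congr 1
  ext
  simp only [mem_neighborFinset, mem_product]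
  exact Iff.rfl

theorem tensorProd_clustering_coeff_general {α β : Type*} [Fintype α] [Fintype β]
    (G : SimpleGraph α) (H : SimpleGraph β) [DecidableRel G.Adj] [DecidableRel H.Adj]
    (k : ℕ) (u : α) (v : β)
    (h1 : (G.degree u).choose k ≠ 0) (h2 : (H.degree v).choose k ≠ 0) :
    (nbhdCliqueCount (tensorProd G H) k (u, v) : ℝ) /
        (((tensorProd G H).degree (u, v)).choose k : ℝ)
      = (k.factorial : ℝ)
        * ((nbhdCliqueCount G k u : ℝ) / ((G.degree u).choose k : ℝ))
        * ((nbhdCliqueCount H k v : ℝ) / ((H.degree v).choose k : ℝ))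
        * (((G.degree u).choose k : ℝ) * ((H.degree v).choose k : ℝ) /
            ((G.degree u * H.degree v).choose k : ℝ)) := by
  rw [degree_tensorProd, nbhdCliqueCount_tensorProd]
  have hG : ((G.degree u).choose k : ℝ) ≠ 0 := Nat.cast_ne_zero.mpr h1
  have hH : ((H.degree v).choose k : ℝ) ≠ 0 := Nat.cast_ne_zero.mpr h2
  push_cast
  field_simp

theorem tensorProd_clustering_coeff {α β : Type*} [Fintype α] [Fintype β]
    (G : SimpleGraph α) (H : SimpleGraph β) [DecidableRel G.Adj] [DecidableRel H.Adj]
    (k : ℕ) (u : α) (v : β)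
    (h1 : (G.degree u).choose k ≠ 0) (h2 : (H.degree v).choose k ≠ 0)
    (h3 : (G.degree u * H.degree v).choose k ≠ 0) :
    (nbhdCliqueCount (tensorProd G H) k (u, v) : ℝ) /
        (((tensorProd G H).degree (u, v)).choose k : ℝ)
      = (k.factorial : ℝ)
        * ((nbhdCliqueCount G k u : ℝ) / ((G.degree u).choose k : ℝ))
        * ((nbhdCliqueCount H k v : ℝ) / ((H.degree v).choose k : ℝ))
        * (((G.degree u).choose k : ℝ) * ((H.degree v).choose k : ℝ) /
            ((G.degree u * H.degree v).choose k : ℝ)) :=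
  tensorProd_clustering_coeff_general G H k u v h1 h2
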